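/- arXiv:1306.0725 — 2 statements merged into one kernel-verified Lean document; each statement's English description precedes it below -/
import Mathlib

section
/- Let k be an algebraically closed field and B ⊆ A a subalgebra pair of finite-dimensional k-algebras with 1_B = 1_A such that A is projective as a right B-module. Let P_1,…,P_s and Q_1,…,Q_r be representatives of the isomorphism classes of projective indecomposable right A-modules and right B-modules respectively; let C be the Cartan matrix of A (c_{ij} = dim_k Hom_A(P_i,P_j)) and D the Cartan matrix of B (d_{ij} = dim_k Hom_B(Q_i,Q_j)); let M be the r×s matrix of restriction, defined by P_j↓_B ≅ ⊕_{i=1}^r m_{ij}·Q_i, and N the r×s matrix of induction, defined by Q_i ⊗_B A ≅ ⊕_{j=1}^s n_{ij}·P_j. Then DM = NC. -/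
set_option linter.unusedSectionVars false

namespace MatDepth

open MulOpposite TensorProduct

universe u v

/-- The space `Hom_A(M, N)` of right `A`-module homomorphisms, as a `k`-subspace of
`Hom_k(M, N)`. -/
def homSub (k : Type*) [Field k] (A : Type*) [Ring A] (M N : Type*)
    [AddCommGroup M] [AddCommGroup N] [Module k M] [Module k N]
    [Module Aᵐᵒᵖ M] [Module Aᵐᵒᵖ N] [SMulCommClass k Aᵐᵒᵖ N] :
    Submodule k (M →ₗ[k] N) where
  carrier := {f | ∀ (x : Aᵐᵒᵖ) (m : M), f (x • m) = x • f m}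
  add_mem' := by
    intro f g hf hg x m
    simp only [LinearMap.add_apply, hf x m, hg x m, smul_add]
  zero_mem' := by intro x m; simp
  smul_mem' := by
    intro c f hf x m
    simp only [LinearMap.smul_apply, hf x m, smul_comm]

/-- Isomorphism of right `A`-modules (a `k`-linear equivalence commuting with the
right `A`-actions). -/
def rIso (k : Type*) [Field k] (A : Type*) [Ring A] (M N : Type*)
    [AddCommGroup M] [AddCommGroup N] [Module k M] [Module k N]
    [Module Aᵐᵒᵖ M] [Module Aᵐᵒᵖ N] : Prop :=
  ∃ φ : M ≃ₗ[k] N, ∀ (x : Aᵐᵒᵖ) (m : M), φ (x • m) = x • φ m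

/-- A right `A`-module is indecomposable: it is nontrivial and every idempotent right
`A`-module endomorphism is `0` or the identity. -/
def isIndec (k : Type*) [Field k] (A : Type*) [Ring A] (M : Type*)
    [AddCommGroup M] [Module k M] [Module Aᵐᵒᵖ M] : Prop :=
  Nontrivial M ∧ ∀ f : M →ₗ[k] M, (∀ (x : Aᵐᵒᵖ) (m : M), f (x • m) = x • f m) →
    f ∘ₗ f = f → f = 0 ∨ f = LinearMap.id

variable {k : Type u} [Field k] {A : Type u} [Ring A] [Algebra k A]

/-- The balancing relations defining `X ⊗_B A` for a right `B`-module `X`. -/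
def indRel (B : Subalgebra k A) (X : Type u) [AddCommGroup X] [Module k X]
    [Module Bᵐᵒᵖ X] : Submodule k (X ⊗[k] A) :=
  Submodule.span k {z | ∃ (x : X) (b : B) (a : A),
    z = (op b • x) ⊗ₜ[k] a - x ⊗ₜ[k] ((b : A) * a)}

/-- The induced module `X ⊗_B A` of a right `B`-module `X` along `B ⊆ A`. -/
def Ind (B : Subalgebra k A) (X : Type u) [AddCommGroup X] [Module k X]
    [Module Bᵐᵒᵖ X] : Type u :=
  (X ⊗[k] A) ⧸ indRel B X

noncomputable instance (B : Subalgebra k A) (X : Type u) [AddCommGroup X] [Module k X]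
    [Module Bᵐᵒᵖ X] : AddCommGroup (Ind B X) :=
  inferInstanceAs (AddCommGroup ((X ⊗[k] A) ⧸ indRel B X))
noncomputable instance (B : Subalgebra k A) (X : Type u) [AddCommGroup X] [Module k X]
    [Module Bᵐᵒᵖ X] : Module k (Ind B X) :=
  inferInstanceAs (Module k ((X ⊗[k] A) ⧸ indRel B X))

lemma indLe (B : Subalgebra k A) (X : Type u) [AddCommGroup X] [Module k X]
    [Module Bᵐᵒᵖ X] (a : A) :
    indRel B X ≤ (indRel B X).comap (LinearMap.lTensor X (LinearMap.mulRight k a)) := by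
  rw [indRel, Submodule.span_le]
  rintro z ⟨x, b, a', rfl⟩
  simp only [SetLike.mem_coe, Submodule.mem_comap, map_sub, LinearMap.lTensor_tmul,
    LinearMap.mulRight_apply]
  refine Submodule.subset_span ⟨x, b, a' * a, ?_⟩
  rw [mul_assoc]

/-- The right `A`-action on the induced module `X ⊗_B A` (right multiplication on the
second factor). -/
noncomputable def IndAct (B : Subalgebra k A) (X : Type u) [AddCommGroup X] [Module k X]
    [Module Bᵐᵒᵖ X] (a : A) : Ind B X →ₗ[k] Ind B X :=
  Submodule.mapQ _ _ (LinearMap.lTensor X (LinearMap.mulRight k a)) (indLe B X a)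

/-- The restriction of the right `A`-module structure on `M` to a right `B`-module
structure along `B ⊆ A`. -/
def modRes (B : Subalgebra k A) (M : Type*) [AddCommGroup M] [Module Aᵐᵒᵖ M] :
    Module Bᵐᵒᵖ M :=
  Module.compHom M (RingHom.op (B.val : B →+* A) : Bᵐᵒᵖ →+* Aᵐᵒᵖ)

end MatDepth

/-!
Both sides equal `dim_k Hom_B(Q_i, P_j↓_B)`. Decomposing `P_j↓_B ≅ ⊕_l m_{lj}·Q_l` and using that
`Hom_B(Q_i, -)` is additive gives the left side. Frobenius reciprocity
`Hom_A(Q_i ⊗_B A, P_j) ≅ Hom_B(Q_i, P_j↓_B)` (restriction along the unit `x ↦ x ⊗ 1`),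
the decomposition `Q_i ⊗_B A ≅ ⊕_l n_{il}·P_l` and additivity of `Hom_A(-, P_j)` give the right side.
-/

namespace MatDepth

open MulOpposite TensorProduct Module

section HomSub

variable {k A : Type*} [Field k] [Ring A]

@[simp]
theorem mem_homSub {X Y : Type*} [AddCommGroup X] [AddCommGroup Y] [Module k X] [Module k Y]
    [Module Aᵐᵒᵖ X] [Module Aᵐᵒᵖ Y] [SMulCommClass k Aᵐᵒᵖ Y] {f : X →ₗ[k] Y} :
    f ∈ homSub k A X Y ↔ ∀ (a : Aᵐᵒᵖ) (x : X), f (a • x) = a • f x :=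
  Iff.rfl

def homSubCongr {X X' Y Y' : Type*} [AddCommGroup X] [AddCommGroup X'] [AddCommGroup Y]
    [AddCommGroup Y'] [Module k X] [Module k X'] [Module k Y] [Module k Y']
    [Module Aᵐᵒᵖ X] [Module Aᵐᵒᵖ X'] [Module Aᵐᵒᵖ Y] [Module Aᵐᵒᵖ Y']
    [SMulCommClass k Aᵐᵒᵖ Y] [SMulCommClass k Aᵐᵒᵖ Y']
    (eX : X ≃ₗ[k] X') (heX : ∀ (a : Aᵐᵒᵖ) (x : X), eX (a • x) = a • eX x)
    (eY : Y ≃ₗ[k] Y') (heY : ∀ (a : Aᵐᵒᵖ) (y : Y), eY (a • y) = a • eY y) :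
    homSub k A X Y ≃ₗ[k] homSub k A X' Y' :=
  (eX.arrowCongr eY).ofSubmodules _ _ <| by
    ext f
    simp only [Submodule.mem_map_equiv, mem_homSub, LinearEquiv.arrowCongr_symm_apply,
      heX, eY.symm_apply_eq, heY, LinearEquiv.apply_symm_apply]
    exact forall_congr' fun a =>
      (eX.surjective.forall (p := fun x => f (a • x) = a • f x)).symm

def homSubPiRight (X : Type*) [AddCommGroup X] [Module k X] [Module Aᵐᵒᵖ X]
    {ι : Type*} (Y : ι → Type*) [∀ l, AddCommGroup (Y l)] [∀ l, Module k (Y l)]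
    [∀ l, Module Aᵐᵒᵖ (Y l)] [∀ l, SMulCommClass k Aᵐᵒᵖ (Y l)] :
    homSub k A X (∀ l, Y l) ≃ₗ[k] ∀ l, homSub k A X (Y l) where
  toFun f l := ⟨LinearMap.proj l ∘ₗ f.1, fun a x => congr_fun (f.2 a x) l⟩
  invFun g := ⟨LinearMap.pi fun l => (g l).1, fun a x => funext fun l => (g l).2 a x⟩
  map_add' _ _ := rfl
  map_smul' _ _ := rfl
  left_inv _ := rfl
  right_inv _ := rfl

def homSubPiLeft {ι : Type*} [Fintype ι] [DecidableEq ι] (X : ι → Type*)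
    [∀ l, AddCommGroup (X l)] [∀ l, Module k (X l)] [∀ l, Module Aᵐᵒᵖ (X l)]
    (Y : Type*) [AddCommGroup Y] [Module k Y] [Module Aᵐᵒᵖ Y] [SMulCommClass k Aᵐᵒᵖ Y] :
    homSub k A (∀ l, X l) Y ≃ₗ[k] ∀ l, homSub k A (X l) Y where
  toFun f l := ⟨f.1 ∘ₗ LinearMap.single k X l, fun a x => by
    simpa [Pi.single_smul] using f.2 a (Pi.single l x)⟩
  invFun g := ⟨LinearMap.lsum k X k (fun l => (g l).1), fun a x => by
    simp [Finset.smul_sum, (g _).2 a]⟩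
  map_add' _ _ := rfl
  map_smul' _ _ := rfl
  left_inv f := Subtype.ext ((LinearMap.lsum k X k).apply_symm_apply f.1)
  right_inv g := funext fun l => Subtype.ext <|
    congr_fun ((LinearMap.lsum k X k).symm_apply_apply fun l => (g l).1) l

end HomSub

section Finrank

variable {k A : Type*} [Field k] [Ring A] {ι : Type*} [Fintype ι]

theorem finrank_homSub_pi_fin_right (X : Type*) [AddCommGroup X] [Module k X]
    [Module Aᵐᵒᵖ X] [FiniteDimensional k X] (Y : ι → Type*) [∀ l, AddCommGroup (Y l)]
    [∀ l, Module k (Y l)] [∀ l, Module Aᵐᵒᵖ (Y l)] [∀ l, SMulCommClass k Aᵐᵒᵖ (Y l)]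
    [∀ l, FiniteDimensional k (Y l)] (m : ι → ℕ) :
    finrank k (homSub k A X (∀ l, Fin (m l) → Y l))
      = ∑ l, finrank k (homSub k A X (Y l)) * m l := by
  simp [(homSubPiRight X _).finrank_eq, finrank_pi_fintype, mul_comm]

theorem finrank_homSub_pi_fin_left [DecidableEq ι] (X : ι → Type*)
    [∀ l, AddCommGroup (X l)] [∀ l, Module k (X l)] [∀ l, Module Aᵐᵒᵖ (X l)]
    [∀ l, FiniteDimensional k (X l)] (Y : Type*) [AddCommGroup Y] [Module k Y]
    [Module Aᵐᵒᵖ Y] [SMulCommClass k Aᵐᵒᵖ Y] [FiniteDimensional k Y] (m : ι → ℕ) :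
    finrank k (homSub k A (∀ l, Fin (m l) → X l) Y)
      = ∑ l, m l * finrank k (homSub k A (X l) Y) := by
  simp [(homSubPiLeft _ Y).finrank_eq, finrank_pi_fintype]

end Finrank

section Induction

variable {k : Type u} [Field k] {A : Type u} [Ring A] [Algebra k A] {B : Subalgebra k A}
  {X : Type u} [AddCommGroup X] [Module k X] [Module Bᵐᵒᵖ X]

theorem indAct_mk_tmul (a : A) (x : X) (a' : A) :
    IndAct B X a (Submodule.Quotient.mk (x ⊗ₜ a')) = Submodule.Quotient.mk (x ⊗ₜ (a' * a)) :=
  rfl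

theorem Ind.hom_ext {W : Type*} [AddCommGroup W] [Module k W] {f g : Ind B X →ₗ[k] W}
    (h : ∀ (x : X) (a : A),
      f (Submodule.Quotient.mk (x ⊗ₜ a)) = g (Submodule.Quotient.mk (x ⊗ₜ a))) :
    f = g :=
  Submodule.linearMap_qext _ (TensorProduct.ext' h)

variable (B X) in
noncomputable def indActHom : Aᵐᵒᵖ →+* Module.End k (Ind B X) where
  toFun a := IndAct B X a.unop
  map_one' := Ind.hom_ext fun x a => by
    rw [unop_one, indAct_mk_tmul, mul_one]
    rfl
  map_mul' a a' := Ind.hom_ext fun x a'' => by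
    rw [unop_mul, indAct_mk_tmul, ← mul_assoc]
    rfl
  map_zero' := Ind.hom_ext fun x a => by
    rw [unop_zero, indAct_mk_tmul, mul_zero, tmul_zero, Submodule.Quotient.mk_zero]
    rfl
  map_add' a a' := Ind.hom_ext fun x a'' => by
    rw [unop_add, indAct_mk_tmul, mul_add, tmul_add, Submodule.Quotient.mk_add]
    rfl

noncomputable instance : Module Aᵐᵒᵖ (Ind B X) :=
  Module.compHom _ (indActHom B X)

theorem op_smul_eq_indAct (a : A) (z : Ind B X) : op a • z = IndAct B X a z :=
  rfl

end Induction

section Reciprocity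

variable {k : Type u} [Field k] {A : Type u} [Ring A] [Algebra k A] {B : Subalgebra k A}
  {X : Type u} [AddCommGroup X] [Module k X] [Module Bᵐᵒᵖ X]
  {Y : Type*} [AddCommGroup Y] [Module k Y] [Module Aᵐᵒᵖ Y] [IsScalarTower k Aᵐᵒᵖ Y]
  [Module Bᵐᵒᵖ Y] [SMulCommClass k Bᵐᵒᵖ Y] (hY : ∀ (b : B) (y : Y), op b • y = op (b : A) • y)

variable (B X) in
noncomputable def indUnit : X →ₗ[k] Ind B X :=
  (indRel B X).mkQ ∘ₗ (TensorProduct.mk k X A).flip 1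

theorem indUnit_apply (x : X) :
    indUnit B X x = Submodule.Quotient.mk (x ⊗ₜ (1 : A)) :=
  rfl

theorem mk_tmul_eq_op_smul_indUnit (x : X) (a : A) :
    (Submodule.Quotient.mk (x ⊗ₜ a) : Ind B X) = op a • indUnit B X x := by
  rw [op_smul_eq_indAct, indUnit_apply, indAct_mk_tmul, one_mul]

theorem indUnit_op_smul (b : B) (x : X) :
    indUnit B X (op b • x) = op (b : A) • indUnit B X x := by
  rw [indUnit_apply, ← mk_tmul_eq_op_smul_indUnit]
  exact (Submodule.Quotient.eq _).2 (Submodule.subset_span ⟨x, b, 1, by rw [mul_one]⟩)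

noncomputable def indLiftAux (f : X →ₗ[k] Y) : X ⊗[k] A →ₗ[k] Y :=
  TensorProduct.lift
    (((Algebra.lsmul k k Y).toLinearMap ∘ₗ (opLinearEquiv k).toLinearMap).compl₂ f).flip

theorem indLiftAux_tmul (f : X →ₗ[k] Y) (x : X) (a : A) :
    indLiftAux f (x ⊗ₜ a) = op a • f x :=
  rfl

include hY in
theorem indRel_le_ker_indLiftAux {f : X →ₗ[k] Y} (hf : f ∈ homSub k B X Y) :
    indRel B X ≤ LinearMap.ker (indLiftAux f) := by
  rw [indRel, Submodule.span_le]
  rintro _ ⟨x, b, a, rfl⟩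
  rw [SetLike.mem_coe, LinearMap.mem_ker, map_sub, indLiftAux_tmul, indLiftAux_tmul, hf, hY,
    smul_smul, op_mul, sub_self]

noncomputable def indLift {f : X →ₗ[k] Y} (hf : f ∈ homSub k B X Y) : Ind B X →ₗ[k] Y :=
  (indRel B X).liftQ (indLiftAux f) (indRel_le_ker_indLiftAux hY hf)

theorem indLift_mk_tmul {f : X →ₗ[k] Y} (hf : f ∈ homSub k B X Y) (x : X) (a : A) :
    indLift hY hf (Submodule.Quotient.mk (x ⊗ₜ a)) = op a • f x :=
  rfl

variable [SMulCommClass k Aᵐᵒᵖ Y]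

theorem indLift_mem_homSub {f : X →ₗ[k] Y} (hf : f ∈ homSub k B X Y) :
    indLift hY hf ∈ homSub k A (Ind B X) Y := fun a z => by
  have hcomm : indLift hY hf ∘ₗ indActHom B X a = Algebra.lsmul k k Y a ∘ₗ indLift hY hf :=
    Ind.hom_ext fun x a' => by
      change indLift hY hf (IndAct B X a.unop (Submodule.Quotient.mk (x ⊗ₜ a')))
        = a • indLift hY hf (Submodule.Quotient.mk (x ⊗ₜ a'))
      rw [indAct_mk_tmul, indLift_mk_tmul, indLift_mk_tmul, op_mul, op_unop, mul_smul]
  exact LinearMap.congr_fun hcomm z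

noncomputable def homSubIndEquiv : homSub k A (Ind B X) Y ≃ₗ[k] homSub k B X Y where
  toFun g := ⟨g.1 ∘ₗ indUnit B X, fun b x => by
    change g.1 (indUnit B X (op b.unop • x)) = b • g.1 (indUnit B X x)
    rw [indUnit_op_smul, g.2, ← hY, op_unop]⟩
  invFun f := ⟨indLift hY f.2, indLift_mem_homSub hY f.2⟩
  map_add' _ _ := rfl
  map_smul' _ _ := rfl
  left_inv g := Subtype.ext <| Ind.hom_ext fun x a => by
    rw [indLift_mk_tmul, mk_tmul_eq_op_smul_indUnit, g.2]
    rfl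
  right_inv f := Subtype.ext <| LinearMap.ext fun x => by
    change indLift hY f.2 (Submodule.Quotient.mk (x ⊗ₜ 1)) = f.1 x
    rw [indLift_mk_tmul, op_one, one_smul]

end Reciprocity

end MatDepth

open MatDepth MulOpposite in
theorem cartan_matrices_relate_restriction_and_induction_general
    (k : Type u) [Field k]
    (A : Type u) [Ring A] [Algebra k A]
    (B : Subalgebra k A)
    (s r : ℕ)
    (P : Fin s → Type u) [∀ j, AddCommGroup (P j)] [∀ j, Module k (P j)]
    [∀ j, Module Aᵐᵒᵖ (P j)] [∀ j, SMulCommClass k Aᵐᵒᵖ (P j)]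
    [∀ j, IsScalarTower k Aᵐᵒᵖ (P j)] [∀ j, FiniteDimensional k (P j)]
    (Q : Fin r → Type u) [∀ i, AddCommGroup (Q i)] [∀ i, Module k (Q i)]
    [∀ i, Module Bᵐᵒᵖ (Q i)] [∀ i, SMulCommClass k Bᵐᵒᵖ (Q i)]
    [∀ i, FiniteDimensional k (Q i)]
    (M N : Fin r → Fin s → ℕ)
    (hM : ∀ j, ∃ φ : P j ≃ₗ[k] (∀ i, Fin (M i j) → Q i),
      ∀ (b : B) (p : P j), φ (op (b : A) • p) = fun i l => op b • φ p i l)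
    (hN : ∀ i, ∃ φ : Ind B (Q i) ≃ₗ[k] (∀ j, Fin (N i j) → P j),
      ∀ (a : A) (z : Ind B (Q i)), φ (IndAct B (Q i) a z) = fun j l => op a • φ z j l) :
    ∀ (i : Fin r) (j : Fin s),
      ∑ l : Fin r, Module.finrank k (homSub k B (Q i) (Q l)) * M l j
        = ∑ l : Fin s, N i l * Module.finrank k (homSub k A (P l) (P j)) := by
  intro i j
  obtain ⟨φ, hφ⟩ := hM j
  obtain ⟨ψ, hψ⟩ := hN i
  let : Module Bᵐᵒᵖ (P j) := modRes B (P j)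
  have : SMulCommClass k Bᵐᵒᵖ (P j) := ⟨fun c b p => smul_comm c (op (b.unop : A)) p⟩
  calc ∑ l, Module.finrank k (homSub k B (Q i) (Q l)) * M l j
      = Module.finrank k (homSub k B (Q i) (∀ l, Fin (M l j) → Q l)) :=
        (finrank_homSub_pi_fin_right _ _ _).symm
    _ = Module.finrank k (homSub k B (Q i) (P j)) :=
        (homSubCongr (.refl k _) (fun _ _ => rfl) φ fun b p => hφ b.unop p).finrank_eq.symm
    _ = Module.finrank k (homSub k A (Ind B (Q i)) (P j)) :=
        (homSubIndEquiv fun _ _ => rfl).finrank_eq.symm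
    _ = Module.finrank k (homSub k A (∀ l, Fin (N i l) → P l) (P j)) :=
        (homSubCongr ψ (fun a z => hψ a.unop z) (.refl k _) fun _ _ => rfl).finrank_eq
    _ = ∑ l, N i l * Module.finrank k (homSub k A (P l) (P j)) :=
        finrank_homSub_pi_fin_left _ _ _

open MatDepth MulOpposite in
/-- over an algebraically closed field `k`, for a subalgebra pair `B ⊆ A` of
finite-dimensional algebras with `A` projective as a right `B`-module, with `P₁,…,P_s` and
`Q₁,…,Q_r` the projective indecomposable right `A`- resp. `B`-modules, `M` the matrix of
restriction (`P_j↓_B ≅ ⊕ᵢ m_{ij}·Qᵢ`), `N` the matrix of induction (`Qᵢ ⊗_B A ≅ ⊕ⱼ n_{ij}·P_j`),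
and `C`, `D` the Cartan matrices `c_{ij} = dim Hom_A(Pᵢ,Pⱼ)`, `d_{ij} = dim Hom_B(Qᵢ,Qⱼ)`,
one has `D M = N C`. -/
theorem cartan_matrices_relate_restriction_and_induction
    (k : Type u) [Field k] [IsAlgClosed k]
    (A : Type u) [Ring A] [Algebra k A] [FiniteDimensional k A]
    (B : Subalgebra k A)
    (hAprojB : @Module.Projective Bᵐᵒᵖ _ A _ (modRes B A))
    (s r : ℕ)
    (P : Fin s → Type u) [∀ j, AddCommGroup (P j)] [∀ j, Module k (P j)]
    [∀ j, Module Aᵐᵒᵖ (P j)] [∀ j, SMulCommClass k Aᵐᵒᵖ (P j)]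
    [∀ j, IsScalarTower k Aᵐᵒᵖ (P j)] [∀ j, FiniteDimensional k (P j)]
    (hPproj : ∀ j, Module.Projective Aᵐᵒᵖ (P j))
    (hPindec : ∀ j, isIndec k A (P j))
    (hPdistinct : ∀ j j', j ≠ j' → ¬ rIso k A (P j) (P j'))
    (hPcomplete : ∀ (X : Type u) [AddCommGroup X] [Module k X] [Module Aᵐᵒᵖ X]
      [SMulCommClass k Aᵐᵒᵖ X] [IsScalarTower k Aᵐᵒᵖ X] [FiniteDimensional k X],
      Module.Projective Aᵐᵒᵖ X → isIndec k A X → ∃ j, rIso k A X (P j))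
    (Q : Fin r → Type u) [∀ i, AddCommGroup (Q i)] [∀ i, Module k (Q i)]
    [∀ i, Module Bᵐᵒᵖ (Q i)] [∀ i, SMulCommClass k Bᵐᵒᵖ (Q i)]
    [∀ i, IsScalarTower k Bᵐᵒᵖ (Q i)] [∀ i, FiniteDimensional k (Q i)]
    (hQproj : ∀ i, Module.Projective Bᵐᵒᵖ (Q i))
    (hQindec : ∀ i, isIndec k B (Q i))
    (hQdistinct : ∀ i i', i ≠ i' → ¬ rIso k B (Q i) (Q i'))
    (hQcomplete : ∀ (X : Type u) [AddCommGroup X] [Module k X] [Module Bᵐᵒᵖ X]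
      [SMulCommClass k Bᵐᵒᵖ X] [IsScalarTower k Bᵐᵒᵖ X] [FiniteDimensional k X],
      Module.Projective Bᵐᵒᵖ X → isIndec k B X → ∃ i, rIso k B X (Q i))
    (M N : Fin r → Fin s → ℕ)
    (hM : ∀ j, ∃ φ : P j ≃ₗ[k] (∀ i, Fin (M i j) → Q i),
      ∀ (b : B) (p : P j), φ (op (b : A) • p) = fun i l => op b • φ p i l)
    (hN : ∀ i, ∃ φ : Ind B (Q i) ≃ₗ[k] (∀ j, Fin (N i j) → P j),
      ∀ (a : A) (z : Ind B (Q i)), φ (IndAct B (Q i) a z) = fun j l => op a • φ z j l) :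
    ∀ (i : Fin r) (j : Fin s),
      ∑ l : Fin r, Module.finrank k (homSub k B (Q i) (Q l)) * M l j
        = ∑ l : Fin s, N i l * Module.finrank k (homSub k A (P l) (P j)) :=
  cartan_matrices_relate_restriction_and_induction_general k A B s r P Q M N hM hN
end

section
/- Let G be a finite group and k a field whose characteristic does not divide |G|. Identifying kG with the subalgebra 1_{(kG)*} ⋈ kG of the Drinfeld double D(G), the centers satisfy kZ(G) = Z(D(G)) ∩ kG, where Z(G) is the center of the group G and Z(D(G)) the center of the algebra D(G). -/
set_option linter.unusedSectionVars false

namespace GroupModDepth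

open MulOpposite TensorProduct

universe u

variable (k G : Type u) [Field k] [Group G]

/-- A right `G`-module (`k`-linear representation of `G` by right operators):
a `k`-vector space with a monoid homomorphism `G →* (End_k V)ᵐᵒᵖ`. -/
structure GVec : Type (u+1) where
  V : Type u
  [acg : AddCommGroup V]
  [mod : Module k V]
  σ : G →* (Module.End k V)ᵐᵒᵖ

attribute [instance] GVec.acg GVec.mod

variable {k G}

/-- The action of `g` on a right `G`-module, as a `k`-linear endomorphism. -/
def GVec.act (W : GVec k G) (g : G) : Module.End k W.V := unop (W.σ g)

/-- Tensor product of right `G`-modules with the diagonal action. -/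
noncomputable def GVec.tmul (M N : GVec k G) : GVec k G where
  V := TensorProduct k M.V N.V
  σ :=
  { toFun := fun g => op (TensorProduct.map (M.act g) (N.act g))
    map_one' := by
      apply unop_injective
      refine LinearMap.ext fun v => ?_
      simp only [GVec.act, map_one, unop_one, unop_op]
      rw [show ((1 : Module.End k M.V)) = LinearMap.id from rfl,
        show ((1 : Module.End k N.V)) = LinearMap.id from rfl, TensorProduct.map_id]
      rfl
    map_mul' := fun g h => by
      apply unop_injective
      simp only [GVec.act, map_mul, unop_mul, unop_op, Module.End.mul_eq_comp,
        TensorProduct.map_comp] }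

/-- The trivial right `G`-module `k`. -/
def GVec.triv : GVec k G where
  V := k
  σ := 1

/-- Direct sum (finite product) of right `G`-modules. -/
noncomputable def GVec.pi {m : ℕ} (F : Fin m → GVec k G) : GVec k G where
  V := ∀ i, (F i).V
  σ :=
  { toFun := fun g => op (LinearMap.pi (fun i => ((F i).act g).comp (LinearMap.proj i)))
    map_one' := by
      apply unop_injective
      exact LinearMap.ext fun v => funext fun i => by simp [GVec.act]
    map_mul' := fun g h => by
      apply unop_injective
      refine LinearMap.ext fun v => funext fun i => ?_
      simp [GVec.act, Module.End.mul_eq_comp] }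

/-- `q` copies of a right `G`-module. -/
noncomputable def GVec.copies (q : ℕ) (N : GVec k G) : GVec k G := GVec.pi (fun _ : Fin q => N)

/-- Tensor powers: `tpow W n = W^{⊗(n+1)}` with the diagonal `G`-action. -/
noncomputable def GVec.tpow (W : GVec k G) : ℕ → GVec k G
  | 0 => W
  | n+1 => (W.tpow n).tmul W

/-- `Tsum W n = T_{n+1}(W) = W ⊕ W^{⊗2} ⊕ ⋯ ⊕ W^{⊗(n+1)}`. -/
noncomputable def GVec.Tsum (W : GVec k G) (n : ℕ) : GVec k G :=
  GVec.pi (fun i : Fin (n+1) => W.tpow i)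

/-- `M | N`: `M` is isomorphic to a direct summand of `N` as right `G`-modules
(equivalently, as `kG`-modules). -/
def GVec.Dvd (M N : GVec k G) : Prop :=
  ∃ (f : M.V →ₗ[k] N.V) (g : N.V →ₗ[k] M.V),
    (∀ (x : G) v, f (M.act x v) = N.act x (f v)) ∧
    (∀ (x : G) w, g (N.act x w) = M.act x (g w)) ∧
    (∀ v, g (f v) = v)

/-- Isomorphism of right `G`-modules. -/
def GVec.Iso (M N : GVec k G) : Prop :=
  ∃ (f : M.V →ₗ[k] N.V) (g : N.V →ₗ[k] M.V),
    (∀ (x : G) v, f (M.act x v) = N.act x (f v)) ∧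
    (∀ (x : G) w, g (N.act x w) = M.act x (g w)) ∧
    (∀ v, g (f v) = v) ∧ (∀ w, f (g w) = w)

/-- A right `G`-module `W` (equivalently, `kG`-module) has depth `n`. -/
def GVec.hasDepth (W : GVec k G) : ℕ → Prop
  | 0 => ∃ q, W.Iso (GVec.copies q (GVec.triv (k := k) (G := G)))
  | n+1 => ∃ q, (W.Tsum (n+1)).Dvd (GVec.copies q (W.Tsum n))

/-- The minimum depth `d(W, 𝓜_{kG})` of `W` as a `kG`-module. -/
noncomputable def GVec.minDepth (W : GVec k G) : ℕ∞ :=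
  sInf {m : ℕ∞ | ∃ j : ℕ, m = j ∧ W.hasDepth j}

/-- The action of the group algebra `kG` on a right `G`-module `W`. -/
noncomputable def GVec.aact (W : GVec k G) : MonoidAlgebra k G →ₗ[k] Module.End k W.V :=
  Finsupp.linearCombination k (fun g => W.act g) ∘ₗ
    (MonoidAlgebra.coeffLinearEquiv k).toLinearMap

/-- `W` is a faithful `kG`-module: its annihilator in `kG` is zero. -/
def GVec.Faithful (W : GVec k G) : Prop := ∀ c : MonoidAlgebra k G, W.aact c = 0 → c = 0

/-- `ℓ_W`: the least `n ≥ 1` such that `W^{⊗n}` is a faithful `kG`-module. -/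
noncomputable def GVec.ell (W : GVec k G) : ℕ :=
  sInf {n : ℕ | ∃ m, n = m + 1 ∧ (W.tpow m).Faithful}

end GroupModDepth

namespace GroupModDepth

open MulOpposite TensorProduct

universe u

variable (k G : Type u) [Field k] [Group G]

/-- Conjugation `x ↦ g⁻¹ x g` on the group algebra, extended `k`-linearly. -/
noncomputable def adEnd (g : G) : Module.End k (MonoidAlgebra k G) :=
  MonoidAlgebra.mapDomainLinearMap k k (fun x => g⁻¹ * x * g)

lemma adEnd_single (g x : G) (b : k) :
    adEnd k G g (MonoidAlgebra.single x b) = MonoidAlgebra.single (g⁻¹ * x * g) b :=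
  MonoidAlgebra.mapDomain_single

/-- The group algebra `kG` as a right `G`-module under the adjoint action `x · g = g⁻¹ x g`:
the module `kG_ad` (isomorphic to `Q = D(G)/(kG)⁺D(G)`). -/
noncomputable def adRep : GVec k G where
  V := MonoidAlgebra k G
  σ :=
  { toFun := fun g => op (adEnd k G g)
    map_one' := by
      apply unop_injective
      refine MonoidAlgebra.lhom_ext' fun x => LinearMap.ext fun b => ?_
      simp only [LinearMap.comp_apply, MonoidAlgebra.lsingle_apply, unop_op, unop_one,
        adEnd_single, Module.End.one_apply]
      simp
    map_mul' := fun g h => by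
      apply unop_injective
      refine MonoidAlgebra.lhom_ext' fun x => LinearMap.ext fun b => ?_
      simp only [LinearMap.comp_apply, MonoidAlgebra.lsingle_apply, unop_op, unop_mul,
        Module.End.mul_apply, adEnd_single]
      simp [mul_assoc, mul_inv_rev] }

variable [DecidableEq G]

/-- Data exhibiting `D` as the Drinfeld double `D(G) = (kG)* ⋈ kG` of a finite group:
a linear equivalence `(G → k) ⊗ kG ≃ D` carrying the unit and satisfying the double's
multiplication rule `(p_x ⋈ g)(p_y ⋈ h) = p_x p_{gyg⁻¹} ⋈ gh` on the spanning set. -/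
structure DoubleData (D : Type u) [Ring D] [Algebra k D] : Type u where
  e : ((G → k) ⊗[k] MonoidAlgebra k G) ≃ₗ[k] D
  unit : e ((1 : G → k) ⊗ₜ[k] (1 : MonoidAlgebra k G)) = 1
  mul : ∀ x y g h : G,
    e (Pi.single x (1:k) ⊗ₜ[k] (MonoidAlgebra.of k G g)) *
      e (Pi.single y (1:k) ⊗ₜ[k] (MonoidAlgebra.of k G h))
    = e ((Pi.single x (1:k) * Pi.single (g * y * g⁻¹) (1:k)) ⊗ₜ[k]
        (MonoidAlgebra.of k G (g * h)))

variable {k G}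
variable {D : Type u} [Ring D] [Algebra k D]

/-- The embedding `kG → D(G)`, `z ↦ 1 ⋈ z`. -/
noncomputable def DoubleData.emb (dd : DoubleData k G D) : MonoidAlgebra k G →ₗ[k] D :=
  dd.e.toLinearMap ∘ₗ (TensorProduct.mk k (G → k) (MonoidAlgebra k G)) (1 : G → k)

/-- The subspace `(kG)⁺D(G)` of `D(G)`. -/
noncomputable def DoubleData.QI (dd : DoubleData k G D) : Submodule k D :=
  Submodule.span k {z : D | ∃ (c : MonoidAlgebra k G) (d : D),
    (c.coeff.sum fun _ a => a) = 0 ∧ z = dd.emb c * d}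

/-- The quotient module `Q = D(G)/(kG)⁺D(G)`. -/
def DoubleData.Qcar (dd : DoubleData k G D) : Type u := D ⧸ dd.QI

noncomputable instance (dd : DoubleData k G D) : AddCommGroup dd.Qcar :=
  inferInstanceAs (AddCommGroup (D ⧸ dd.QI))
noncomputable instance (dd : DoubleData k G D) : Module k dd.Qcar :=
  inferInstanceAs (Module k (D ⧸ dd.QI))

/-- The class of an element of `D(G)` in `Q`. -/
noncomputable def DoubleData.Qmk (dd : DoubleData k G D) (d : D) : dd.Qcar := Submodule.Quotient.mk d

lemma DoubleData.QIle (dd : DoubleData k G D) (d' : D) :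
    dd.QI ≤ dd.QI.comap (LinearMap.mulRight k d') := by
  rw [DoubleData.QI, Submodule.span_le]
  rintro z ⟨c, d, hc, rfl⟩
  simp only [SetLike.mem_coe, Submodule.mem_comap, LinearMap.mulRight_apply]
  exact Submodule.subset_span ⟨c, d * d', hc, (mul_assoc _ d d')⟩

/-- Right multiplication by an element of `D(G)` descends to `Q`. -/
noncomputable def DoubleData.Qact (dd : DoubleData k G D) (d' : D) :
    dd.Qcar →ₗ[k] dd.Qcar :=
  Submodule.mapQ _ _ (LinearMap.mulRight k d') (dd.QIle d')

end GroupModDepth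

/-!
Every element of `D(G)` is a combination of the `f ⋈ x`, and the multiplication rule gives
`(f ⋈ x)(1 ⋈ z) = f ⋈ xz` and `(1 ⋈ z)(f ⋈ x) = f(z⁻¹ · z) ⋈ zx`, so `1 ⋈ z` is central when `z` is.
Conversely, if `1 ⋈ c` is central, compare `(1 ⋈ c)(p_y ⋈ 1) = ∑ₐ c_a p_{aya⁻¹} ⋈ a` with
`(p_y ⋈ 1)(1 ⋈ c) = ∑ₐ c_a p_y ⋈ a`: the `x`-components give `c_x p_{xyx⁻¹} = c_x p_y`, so `c_x = 0`
as soon as some `y` does not commute with `x`.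
-/

namespace GroupModDepth

open TensorProduct MonoidAlgebra

universe u

noncomputable def rightCoeff {k G : Type*} [CommSemiring k] (M : Type*) [AddCommMonoid M]
    [Module k M] (x : G) : M ⊗[k] k[G] →ₗ[k] M :=
  TensorProduct.rid k M ∘ₗ
    LinearMap.lTensor M (Finsupp.lapply x ∘ₗ (coeffLinearEquiv k).toLinearMap)

@[simp]
theorem rightCoeff_tmul {k G M : Type*} [CommSemiring k] [AddCommMonoid M] [Module k M] (x : G)
    (m : M) (c : k[G]) : rightCoeff M x (m ⊗ₜ c) = c.coeff x • m :=
  rfl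

namespace DoubleData

variable {k G D : Type u} [Field k] [Group G] [DecidableEq G] [Ring D] [Algebra k D]
  (dd : DoubleData k G D)

theorem emb_apply (c : k[G]) : dd.emb c = dd.e (1 ⊗ₜ c) := rfl

variable [Finite G]

theorem e_tmul_of_mul_e_tmul_of (f f' : G → k) (g h : G) :
    dd.e (f ⊗ₜ of k G g) * dd.e (f' ⊗ₜ of k G h) =
      dd.e ((f * f' ∘ fun x => g⁻¹ * x * g) ⊗ₜ of k G (g * h)) := by
  let tmulOf (a : G) : (G → k) →ₗ[k] D :=
    dd.e.toLinearMap ∘ₗ (TensorProduct.mk k _ _).flip (of k G a)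
  have hbilin : (LinearMap.mul k D).compl₁₂ (tmulOf g) (tmulOf h) =
      ((LinearMap.mul k (G → k)).compr₂ (tmulOf (g * h))).compl₂
        (LinearMap.funLeft k k fun x => g⁻¹ * x * g) := by
    ext x y
    have hconj : LinearMap.funLeft k k (fun w => g⁻¹ * w * g) (Pi.single y 1) =
        Pi.single (g * y * g⁻¹) 1 := by
      funext w
      have : g⁻¹ * w * g = y ↔ w = g * y * g⁻¹ := by constructor <;> rintro rfl <;> group
      simp only [LinearMap.funLeft_apply, Pi.single_apply, this]
    simpa [tmulOf, ← of_apply, hconj] using dd.mul x y g h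
  exact congr($hbilin f f')

theorem e_tmul_of_mul_e_one_tmul_of (f : G → k) (g h : G) :
    dd.e (f ⊗ₜ of k G g) * dd.e (1 ⊗ₜ of k G h) = dd.e (f ⊗ₜ of k G (g * h)) := by
  simpa using dd.e_tmul_of_mul_e_tmul_of f 1 g h

theorem e_one_tmul_of_mul_e_tmul_of (f : G → k) (g h : G) :
    dd.e (1 ⊗ₜ of k G g) * dd.e (f ⊗ₜ of k G h) =
      dd.e ((f ∘ fun x => g⁻¹ * x * g) ⊗ₜ of k G (g * h)) := by
  simpa using dd.e_tmul_of_mul_e_tmul_of 1 f g h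

theorem emb_of_mem_center {z : G} (hz : z ∈ Subgroup.center G) :
    dd.emb (of k G z) ∈ Subalgebra.center k D := by
  have hconj (f : G → k) : (f ∘ fun x => z⁻¹ * x * z) = f := by
    funext x
    rw [Function.comp_apply, mul_assoc, Subgroup.mem_center_iff.mp hz, inv_mul_cancel_left]
  suffices LinearMap.mulRight k (dd.emb (of k G z)) ∘ₗ dd.e.toLinearMap =
      LinearMap.mulLeft k (dd.emb (of k G z)) ∘ₗ dd.e.toLinearMap by
    refine Subalgebra.mem_center_iff.mpr fun b => ?_
    simpa using congr($this (dd.e.symm b))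
  refine TensorProduct.ext (LinearMap.ext fun f => ?_)
  ext x
  simp [emb, ← of_apply, e_tmul_of_mul_e_one_tmul_of, e_one_tmul_of_mul_e_tmul_of, hconj,
    Subgroup.mem_center_iff.mp hz x]

theorem emb_mem_center_of_mem_supported {c : k[G]}
    (hc : c ∈ supported k k (Subgroup.center G : Set G)) : dd.emb c ∈ Subalgebra.center k D := by
  rw [supported_eq_span_single] at hc
  refine Submodule.span_le (p := (Subalgebra.center k D).toSubmodule.comap dd.emb) |>.mpr ?_ hc
  rintro _ ⟨z, hz, rfl⟩
  exact dd.emb_of_mem_center hz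

theorem rightCoeff_emb_mul (c : k[G]) (f : G → k) (x : G) :
    rightCoeff (G → k) x (dd.e.symm (dd.emb c * dd.e (f ⊗ₜ 1))) =
      c.coeff x • (f ∘ fun w => x⁻¹ * w * x) := by
  induction c using MonoidAlgebra.induction_linear with
  | zero => simp
  | add c c' hc hc' => simp [add_mul, add_smul, hc, hc']
  | single a b =>
    rw [← smul_of, ← (of k G).map_one, map_smul, emb_apply, smul_mul_assoc,
      e_one_tmul_of_mul_e_tmul_of]
    by_cases h : a = x <;> simp [h]

theorem rightCoeff_mul_emb (c : k[G]) (f : G → k) (x : G) :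
    rightCoeff (G → k) x (dd.e.symm (dd.e (f ⊗ₜ 1) * dd.emb c)) = c.coeff x • f := by
  induction c using MonoidAlgebra.induction_linear with
  | zero => simp
  | add c c' hc hc' => simp [mul_add, add_smul, hc, hc']
  | single a b =>
    rw [← smul_of, ← (of k G).map_one, map_smul, emb_apply, mul_smul_comm,
      e_tmul_of_mul_e_one_tmul_of]
    by_cases h : a = x <;> simp [h]

theorem coeff_eq_zero_of_emb_mem_center {c : k[G]} (hc : dd.emb c ∈ Subalgebra.center k D)
    {x : G} (hx : x ∉ Subgroup.center G) : c.coeff x = 0 := by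
  obtain ⟨y, hy⟩ : ∃ y, y * x ≠ x * y := by simpa [Subgroup.mem_center_iff] using hx
  have hxy : x * y * x⁻¹ ≠ y := fun h => hy (mul_inv_eq_iff_eq_mul.mp h).symm
  have hconj : x⁻¹ * (x * y * x⁻¹) * x = y := by group
  have hcomm := congr(rightCoeff (G → k) x
    (dd.e.symm $(Subalgebra.mem_center_iff.mp hc (dd.e (Pi.single y 1 ⊗ₜ 1)))))
  rw [rightCoeff_mul_emb, rightCoeff_emb_mul] at hcomm
  simpa [Pi.single_apply, hxy, hconj] using (congr_fun hcomm (x * y * x⁻¹)).symm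

theorem emb_mem_center_iff {c : k[G]} :
    dd.emb c ∈ Subalgebra.center k D ↔ c ∈ supported k k (Subgroup.center G : Set G) :=
  ⟨fun hc => mem_supported'.mpr fun _ hx => dd.coeff_eq_zero_of_emb_mem_center hc hx,
    dd.emb_mem_center_of_mem_supported⟩

end DoubleData

end GroupModDepth

open GroupModDepth TensorProduct in
theorem center_of_drinfeld_double_meet_group_algebra_general
    (k G D : Type u) [Field k] [Group G] [Fintype G] [DecidableEq G]
    [Ring D] [Algebra k D]
    (dd : DoubleData k G D) :
    {d : D | ∃ c : MonoidAlgebra k G,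
        (∀ x : G, x ∉ Subgroup.center G → c.coeff x = 0) ∧ d = dd.e ((1 : G → k) ⊗ₜ[k] c)}
      = Set.center D ∩
        {d : D | ∃ c : MonoidAlgebra k G, d = dd.e ((1 : G → k) ⊗ₜ[k] c)} := by
  ext d
  constructor
  · rintro ⟨c, hc, rfl⟩
    exact ⟨dd.emb_mem_center_iff.mpr (MonoidAlgebra.mem_supported'.mpr hc), c, rfl⟩
  · rintro ⟨hd, c, rfl⟩
    exact ⟨c, MonoidAlgebra.mem_supported'.mp (dd.emb_mem_center_iff.mp hd), rfl⟩

open GroupModDepth TensorProduct in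
/-- for a finite group `G` and a field `k` with `char k ∤ |G|`, identifying
`kG` with the subalgebra `1_{(kG)*} ⋈ kG` of the Drinfeld double `D(G)`, the centers satisfy
`kZ(G) = Z(D(G)) ∩ kG`. -/
theorem center_of_drinfeld_double_meet_group_algebra
    (k G D : Type u) [Field k] [Group G] [Fintype G] [DecidableEq G]
    [Ring D] [Algebra k D]
    (hchar : (Fintype.card G : k) ≠ 0)
    (dd : DoubleData k G D) :
    {d : D | ∃ c : MonoidAlgebra k G,
        (∀ x : G, x ∉ Subgroup.center G → c.coeff x = 0) ∧ d = dd.e ((1 : G → k) ⊗ₜ[k] c)}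
      = Set.center D ∩
        {d : D | ∃ c : MonoidAlgebra k G, d = dd.e ((1 : G → k) ⊗ₜ[k] c)} :=
  center_of_drinfeld_double_meet_group_algebra_general k G D dd
end
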